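/- arXiv:math/0509562 — 5 statements merged into one kernel-verified Lean document; each statement's English description precedes it below -/
import Mathlib

section
/- Let d ≥ 4 be an integer and l, m ∈ ℝ. Then there exists an index i with 1 ≤ i ≤ d−1 such that (2l−i)(2l−i+1)(3m−(d−i)+1) + (2m−(d−i))(2m−(d−i)+1)(3l−i+1) ≠ 0. -/
/-- For `d ≥ 4`, the determinants `Δ_i` cannot all vanish: there is some
`i` with `1 ≤ i ≤ d - 1` for which `Δ_i ≠ 0`. -/
theorem stmt1 (d : ℕ) (hd : 4 ≤ d) (l m : ℝ) :
    ∃ i : ℕ, 1 ≤ i ∧ i ≤ d - 1 ∧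
      (2*l - i) * (2*l - i + 1) * (3*m - ((d:ℝ) - i) + 1)
        + (2*m - ((d:ℝ) - i)) * (2*m - ((d:ℝ) - i) + 1) * (3*l - i + 1) ≠ 0 := by
  by_contra h
  push_neg at h
  have h1 := h 1 (by norm_num) (by omega)
  have h2 := h 2 (by norm_num) (by omega)
  have h3 := h 3 (by norm_num) (by omega)
  push_cast at h1 h2 h3
  have hD : (4:ℝ) ≤ (d:ℝ) := by exact_mod_cast hd
  have hA : (d:ℝ) - l - m = 0 := by linear_combination (h1 - 2*h2 + h3)/2
  have hB : (l - m) * ((d:ℝ) + 1) = 0 := by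
    linear_combination (-5/2)*h1 + 4*h2 + (-3/2)*h3 + ((d:ℝ) + 4*l - 4*m) * hA
  have hlm : l = m := by
    rcases mul_eq_zero.mp hB with h' | h'
    · linarith
    · linarith
  subst hlm
  have hDm : (d:ℝ) = 2*l := by linarith
  rw [hDm] at h1
  nlinarith [h1, sq_nonneg l, sq_nonneg (l-1)]
end

section
/- Let d ≥ 4 be an integer, l, m ∈ ℝ, and let (c_0, …, c_d) ∈ ℝ^{d+1} satisfy: (i) (2l−i)·c_{i+1} + (2m−(d−i)+1)·c_i = 0 for all 0 ≤ i ≤ d−1, and (ii) (3l−i)·c_{i+2} + (3m−(d−i)+2)·c_i = 0 for all 0 ≤ i ≤ d−2. Then c_i = 0 for all i. -/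
/-- The key quadratic polynomial obtained by eliminating variables from the
singularity equations. -/
def Fq (l m d x : ℝ) : ℝ :=
  (2*l-x)*(2*l-x-1)*(3*m-d+x+2) + (2*m-d+x+1)*(2*m-d+x+2)*(3*l-x)

lemma Fq_aux (l m d : ℝ) (hd : (4:ℝ) ≤ d) (h0 : Fq l m d 0 = 0)
    (h1 : Fq l m d 1 = 0) (h2 : Fq l m d 2 = 0) : False := by
  simp only [Fq] at h0 h1 h2
  have hm : m = d - l := by linear_combination -(h0 - 2*h1 + h2)/2
  subst hm
  have h2l : (d+1)*(2*l-d) = 0 := by linear_combination h1 - h0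
  have hl : 2*l = d := by
    rcases mul_eq_zero.mp h2l with h | h
    · linarith
    · linarith
  have hl' : l = d/2 := by linarith
  rw [hl'] at h0
  have hz : d*((d-1)*(d+4) + 6) = 0 := by linear_combination 2*h0
  have hp : (0:ℝ) < (d-1)*(d+4)+6 := by nlinarith
  have := mul_pos (show (0:ℝ) < d by linarith) hp
  linarith

/-- There are no singular vectors of degree `d ≥ 4` on the line: the
singularity equations force all coefficients `c_0, …, c_d` to vanish. -/
theorem stmt2 (d : ℕ) (hd : 4 ≤ d) (l m : ℝ) (c : ℕ → ℝ)
    (h1 : ∀ i : ℕ, i ≤ d - 1 →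
      (2*l - i) * c (i+1) + (2*m - ((d:ℝ) - i) + 1) * c i = 0)
    (h2 : ∀ i : ℕ, i ≤ d - 2 →
      (3*l - i) * c (i+2) + (3*m - ((d:ℝ) - i) + 2) * c i = 0) :
    ∀ i : ℕ, i ≤ d → c i = 0 := by
  have key : ∀ i : ℕ, i ≤ d - 2 → Fq l m d i * c i = 0 ∧
      Fq l m d i * c (i+1) = 0 ∧ Fq l m d i * c (i+2) = 0 := by
    intro i hi
    have a1 := h1 i (by omega)
    have a2 := h1 (i+1) (by omega)
    have a3 := h2 i hi
    rw [show i+1+1 = i+2 by omega] at a2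
    push_cast at a1 a2 a3
    simp only [Fq]
    refine ⟨?_, ?_, ?_⟩
    · linear_combination ((3*l-(i:ℝ))*(2*m-d+i+2))*a1 - ((3*l-(i:ℝ))*(2*l-i))*a2 +
        ((2*l-(i:ℝ))*(2*l-i-1))*a3
    · linear_combination ((3*m-d+(i:ℝ)+2)*(2*l-i-1))*a1 + ((3*l-(i:ℝ))*(2*m-d+i+1))*a2 -
        ((2*l-(i:ℝ)-1)*(2*m-d+i+1))*a3
    · linear_combination (-(3*m-d+(i:ℝ)+2)*(2*m-d+i+2))*a1 + ((2*l-(i:ℝ))*(3*m-d+i+2))*a2 +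
        ((2*m-d+(i:ℝ)+1)*(2*m-d+i+2))*a3
  have up : ∀ i : ℕ, i ≤ d - 2 → c i = 0 → c (i+1) = 0 → c (i+2) = 0 := by
    intro i hi e0 e1
    have a2 := h1 (i+1) (by omega)
    have a3 := h2 i hi
    rw [show i+1+1 = i+2 by omega] at a2
    push_cast at a2 a3
    rw [e1] at a2
    rw [e0] at a3
    by_contra hne
    have k2 : 2*l - ((i:ℝ)+1) = 0 := by
      have : (2*l - ((i:ℝ)+1)) * c (i+2) = 0 := by linarith
      exact (mul_eq_zero.mp this).resolve_right hne
    have k3 : 3*l - (i:ℝ) = 0 := by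
      have : (3*l - (i:ℝ)) * c (i+2) = 0 := by linarith
      exact (mul_eq_zero.mp this).resolve_right hne
    have : (0:ℝ) ≤ (i:ℝ) := Nat.cast_nonneg i
    linarith
  have down : ∀ i : ℕ, i ≤ d - 2 → c (i+1) = 0 → c (i+2) = 0 → c i = 0 := by
    intro i hi e1 e2
    have a1 := h1 i (by omega)
    have a3 := h2 i hi
    push_cast at a1 a3
    rw [e1] at a1
    rw [e2] at a3
    by_contra hne
    have k1 : 2*m - ((d:ℝ) - i) + 1 = 0 := by
      have : (2*m - ((d:ℝ) - i) + 1) * c i = 0 := by linarith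
      exact (mul_eq_zero.mp this).resolve_right hne
    have k3 : 3*m - ((d:ℝ) - i) + 2 = 0 := by
      have : (3*m - ((d:ℝ) - i) + 2) * c i = 0 := by linarith
      exact (mul_eq_zero.mp this).resolve_right hne
    have hid : (i:ℝ) ≤ (d:ℝ) := by exact_mod_cast Nat.cast_le.mpr (by omega : i ≤ d)
    linarith
  have hex : ∃ i0 : ℕ, i0 ≤ 2 ∧ Fq l m d (i0:ℝ) ≠ 0 := by
    by_contra h
    push_neg at h
    have g0 := h 0 (by norm_num)
    have g1 := h 1 (by norm_num)
    have g2 := h 2 (by norm_num)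
    push_cast at g0 g1 g2
    exact Fq_aux l m d (by exact_mod_cast Nat.cast_le.mpr hd) g0 g1 g2
  obtain ⟨i0, hi0, hF⟩ := hex
  obtain ⟨z0, z1, z2⟩ := key i0 (by omega)
  have c0 : c i0 = 0 := (mul_eq_zero.mp z0).resolve_left hF
  have c1 : c (i0+1) = 0 := (mul_eq_zero.mp z1).resolve_left hF
  have c2 : c (i0+2) = 0 := (mul_eq_zero.mp z2).resolve_left hF
  have hup : ∀ k : ℕ, i0 + k ≤ d → c (i0 + k) = 0 := by
    intro k
    induction k using Nat.strong_induction_on with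
    | _ k ih =>
      intro hk
      match k with
      | 0 => simpa using c0
      | 1 => simpa using c1
      | (t+2) =>
        have e0 : c (i0 + t) = 0 := ih t (by omega) (by omega)
        have e1 : c (i0 + t + 1) = 0 := by
          have := ih (t+1) (by omega) (by omega)
          rwa [show i0 + (t+1) = i0 + t + 1 by omega] at this
        have := up (i0 + t) (by omega) e0 e1
        rwa [show i0 + (t+2) = i0 + t + 2 by omega]
  have hdown : ∀ k : ℕ, k ≤ i0 + 1 → c (i0 + 1 - k) = 0 := by
    intro k
    induction k using Nat.strong_induction_on with
    | _ k ih =>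
      intro hk
      match k with
      | 0 => simpa using c1
      | 1 => simpa [show i0 + 1 - 1 = i0 by omega] using c0
      | (t+2) =>
        have e1 : c (i0 + 1 - (t+2) + 1) = 0 := by
          have := ih (t+1) (by omega) (by omega)
          rwa [show i0 + 1 - (t+1) = i0 + 1 - (t+2) + 1 by omega] at this
        have e2 : c (i0 + 1 - (t+2) + 2) = 0 := by
          have := ih t (by omega) (by omega)
          rwa [show i0 + 1 - t = i0 + 1 - (t+2) + 2 by omega] at this
        exact down (i0 + 1 - (t+2)) (by omega) e1 e2
  intro j hj
  rcases le_or_gt i0 j with hle | hlt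
  · have := hup (j - i0) (by omega)
    rwa [show i0 + (j - i0) = j by omega] at this
  · have := hdown (i0 + 1 - j) (by omega)
    rwa [show i0 + 1 - (i0 + 1 - j) = j by omega] at this
end

section
/- Let d ≥ 1 be an integer, l, m ∈ ℝ, and (c_0, …, c_d) ∈ ℝ^{d+1} satisfy (2l−i)·c_{i+1} + (2m−(d−i)+1)·c_i = 0 for all 0 ≤ i ≤ d−1 and (3l−i)·c_{i+2} + (3m−(d−i)+2)·c_i = 0 for all 0 ≤ i ≤ d−2. If for some index i with 1 ≤ i ≤ d−1 one has c_i = 0 and c_{i+1} = 0, then also c_{i−1} = 0. -/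
/-- Propagation of vanishing: if two consecutive coefficients of a
degree-`d` singular vector on the line vanish, so does the preceding one. -/
theorem stmt3 (d : ℕ) (hd : 1 ≤ d) (l m : ℝ) (c : ℕ → ℝ)
    (h1 : ∀ i : ℕ, i ≤ d - 1 →
      (2*l - i) * c (i+1) + (2*m - ((d:ℝ) - i) + 1) * c i = 0)
    (h2 : ∀ i : ℕ, i ≤ d - 2 →
      (3*l - i) * c (i+2) + (3*m - ((d:ℝ) - i) + 2) * c i = 0)
    (i : ℕ) (hi1 : 1 ≤ i) (hi2 : i ≤ d - 1) (hci : c i = 0) (hci1 : c (i+1) = 0) :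
    c (i-1) = 0 := by
  have hd2 : 2 ≤ d := by omega
  have e1 := h1 (i-1) (by omega)
  have e2 := h2 (i-1) (by omega)
  rw [show i-1+1 = i from by omega] at e1
  rw [show i-1+2 = i+1 from by omega] at e2
  rw [hci, mul_zero, zero_add] at e1
  rw [hci1, mul_zero, zero_add] at e2
  have hc : ((i-1:ℕ):ℝ) = (i:ℝ) - 1 := by
    push_cast [hi1]; ring
  rw [hc] at e1 e2
  by_contra hne
  have h1' : 2*m - ((d:ℝ) - ((i:ℝ)-1)) + 1 = 0 :=
    (mul_eq_zero.mp e1).resolve_right hne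
  have h2' : 3*m - ((d:ℝ) - ((i:ℝ)-1)) + 2 = 0 :=
    (mul_eq_zero.mp e2).resolve_right hne
  have hid : (i:ℝ) ≤ d := by exact_mod_cast (by omega : i ≤ d)
  linarith
end

section
/- The set of pairs (l, m) ∈ ℝ² satisfying both equations (2l−1)·2l·(3m−1) + (2m−2)(2m−1)·3l = 0 and (2l−2)(2l−1)·3m + (2m−1)·2m·(3l−1) = 0 is exactly {(0,0), (0,2), (2,0), (1/2,1/2), (2/3,2/3)}. -/
/-- The determinant conditions `Δ₁ = Δ₂ = 0` for a third-order invariant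
bilinear operator on the line hold exactly for the five pairs
`(0,0), (0,2), (2,0), (1/2,1/2), (2/3,2/3)`. -/
theorem stmt5 :
    {p : ℝ × ℝ |
      (2*p.1 - 1) * (2*p.1) * (3*p.2 - 1) + (2*p.2 - 2) * (2*p.2 - 1) * (3*p.1) = 0 ∧
      (2*p.1 - 2) * (2*p.1 - 1) * (3*p.2) + (2*p.2 - 1) * (2*p.2) * (3*p.1 - 1) = 0}
    = {(0, 0), (0, 2), (2, 0), (1/2, 1/2), (2/3, 2/3)} := by
  ext ⟨l, m⟩
  simp only [Set.mem_setOf_eq, Set.mem_insert_iff, Set.mem_singleton_iff, Prod.mk.injEq]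
  constructor
  · rintro ⟨h1, h2⟩
    have h1' : l * (3*l*m + 3*m^2 - l - 6*m + 2) = 0 := by linear_combination h1 / 4
    have h2' : m * (3*l*m + 3*l^2 - m - 6*l + 2) = 0 := by linear_combination h2 / 4
    rcases mul_eq_zero.mp h1' with hl | hA
    · -- l = 0
      rcases mul_eq_zero.mp h2' with hm | hB
      · exact Or.inl ⟨hl, hm⟩
      · have hm2 : m = 2 := by linear_combination -hB + 3*m*hl + 3*l*hl - 6*hl
        exact Or.inr (Or.inl ⟨hl, hm2⟩)
    · rcases mul_eq_zero.mp h2' with hm | hB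
      · -- m = 0
        have hl2 : l = 2 := by linear_combination -hA + 3*l*hm + 3*m*hm - 6*hm
        exact Or.inr (Or.inr (Or.inl ⟨hl2, hm⟩))
      · have hd : (m - l) * (3*m + 3*l - 5) = 0 := by linear_combination hA - hB
        rcases mul_eq_zero.mp hd with heq | h5
        · -- m = l
          have hml : m = l := by linarith [sub_eq_zero.mp heq]
          subst hml
          have hf : (2*m - 1) * (3*m - 2) = 0 := by linear_combination hA
          rcases mul_eq_zero.mp hf with h | h
          · exact Or.inr (Or.inr (Or.inr (Or.inl ⟨by linarith, by linarith⟩)))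
          · exact Or.inr (Or.inr (Or.inr (Or.inr ⟨by linarith, by linarith⟩)))
        · exfalso
          have : (1:ℝ) = 0 := by linear_combination 3*hA - 3*m*h5 + h5
          norm_num at this
  · rintro (⟨hl, hm⟩ | ⟨hl, hm⟩ | ⟨hl, hm⟩ | ⟨hl, hm⟩ | ⟨hl, hm⟩) <;> subst hl <;> subst hm <;>
      constructor <;> norm_num
end

section
/- For smooth functions a, f, g : ℝ → ℝ, define B(f,g) = 2f'''·g − 2f·g''' + 3f''·g' − 3f'·g'' and L^λ_a h = a·h' + λ·a'·h. Then L^{5/3}_a B(f,g) = B(L^{−2/3}_a f, g) + B(f, L^{−2/3}_a g). -/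
/-- Lie derivative of a `λ`-density on the line along `a ∂ₓ`. -/
noncomputable def lieDensity (lam : ℝ) (a h : ℝ → ℝ) : ℝ → ℝ :=
  fun x => a x * deriv h x + lam * deriv a x * h x

private lemma cd_deriv {h : ℝ → ℝ} (hh : ContDiff ℝ (⊤ : ℕ∞) h) : ContDiff ℝ (⊤ : ℕ∞) (deriv h) := by
  exact (contDiff_infty_iff_deriv.mp hh).2

private lemma deriv_fun_add' {f g : ℝ → ℝ} (hf : ContDiff ℝ (⊤ : ℕ∞) f) (hg : ContDiff ℝ (⊤ : ℕ∞) g) :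
    deriv (fun x => f x + g x) = fun x => deriv f x + deriv g x :=
  funext fun x => deriv_fun_add (hf.differentiable (by simp) x) (hg.differentiable (by simp) x)

private lemma deriv_fun_sub' {f g : ℝ → ℝ} (hf : ContDiff ℝ (⊤ : ℕ∞) f) (hg : ContDiff ℝ (⊤ : ℕ∞) g) :
    deriv (fun x => f x - g x) = fun x => deriv f x - deriv g x :=
  funext fun x => deriv_fun_sub (hf.differentiable (by simp) x) (hg.differentiable (by simp) x)

private lemma deriv_fun_mul' {f g : ℝ → ℝ} (hf : ContDiff ℝ (⊤ : ℕ∞) f) (hg : ContDiff ℝ (⊤ : ℕ∞) g) :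
    deriv (fun x => f x * g x) = fun x => deriv f x * g x + f x * deriv g x :=
  funext fun x => deriv_fun_mul (hf.differentiable (by simp) x) (hg.differentiable (by simp) x)

private lemma deriv_fun_const_mul {f : ℝ → ℝ} (c : ℝ) (hf : ContDiff ℝ (⊤ : ℕ∞) f) :
    deriv (fun x => c * f x) = fun x => c * deriv f x :=
  funext fun x => deriv_const_mul c (hf.differentiable (by simp) x)
/-- The exceptional third-order Grozman operator
`T₂(f,g) = 2f'''g - 2fg''' + 3f''g' - 3f'g''` from pairs of `(-2/3)`-densities
to `(5/3)`-densities is invariant under all vector fields on the line. -/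
theorem stmt13 (a f g : ℝ → ℝ)
    (ha : ContDiff ℝ (⊤ : ℕ∞) a) (hf : ContDiff ℝ (⊤ : ℕ∞) f) (hg : ContDiff ℝ (⊤ : ℕ∞) g) :
    ∀ x : ℝ,
      lieDensity (5/3) a
        (fun y => 2 * deriv (deriv (deriv f)) y * g y - 2 * f y * deriv (deriv (deriv g)) y
          + 3 * deriv (deriv f) y * deriv g y - 3 * deriv f y * deriv (deriv g) y) x
        = (2 * deriv (deriv (deriv (lieDensity (-2/3) a f))) x * g x
            - 2 * lieDensity (-2/3) a f x * deriv (deriv (deriv g)) x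
            + 3 * deriv (deriv (lieDensity (-2/3) a f)) x * deriv g x
            - 3 * deriv (lieDensity (-2/3) a f) x * deriv (deriv g) x)
          + (2 * deriv (deriv (deriv f)) x * lieDensity (-2/3) a g x
            - 2 * f x * deriv (deriv (deriv (lieDensity (-2/3) a g))) x
            + 3 * deriv (deriv f) x * deriv (lieDensity (-2/3) a g) x
            - 3 * deriv f x * deriv (deriv (lieDensity (-2/3) a g)) x) := by
  intro x
  have ha1 := cd_deriv ha
  have ha2 := cd_deriv ha1
  have ha3 := cd_deriv ha2
  have ha4 := cd_deriv ha3
  have hf1 := cd_deriv hf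
  have hf2 := cd_deriv hf1
  have hf3 := cd_deriv hf2
  have hf4 := cd_deriv hf3
  have hg1 := cd_deriv hg
  have hg2 := cd_deriv hg1
  have hg3 := cd_deriv hg2
  have hg4 := cd_deriv hg3
  unfold lieDensity
  simp (disch := fun_prop) only [deriv_fun_add', deriv_fun_sub', deriv_fun_mul',
    deriv_fun_const_mul, deriv_const']
  ring
end
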